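/- Let n ≥ 1, s, s₁, s₂ ∈ ℝ and 0 < q, q₁, q₂, r, r₁, r₂ ≤ ∞ satisfy s = s₁ + s₂, 1/q = 1/q₁ + 1/q₂ and 1/r = 1/r₁ + 1/r₂. Then for all measurable functions f, g on ℝⁿ, ‖f·g‖_{K̇^s_{q,r}} ≤ ‖f‖_{K̇^{s₁}_{q₁,r₁}} · ‖g‖_{K̇^{s₂}_{q₂,r₂}}. -/

import Mathlib

open MeasureTheory Set ENNReal Filter

noncomputable section

abbrev Euc (n : ℕ) : Type := EuclideanSpace ℝ (Fin n)

def annulus (n : ℕ) (j : ℤ) : Set (Euc n) :=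
  {x : Euc n | (2 : ℝ) ^ (j - 1) ≤ ‖x‖ ∧ ‖x‖ < (2 : ℝ) ^ j}

def herzNorm (n : ℕ) (s : ℝ) (q r : ℝ≥0∞) (f : Euc n → ℝ) : ℝ≥0∞ :=
  if r = ⊤ then
    ⨆ j : ℤ, ENNReal.ofReal ((2 : ℝ) ^ ((j : ℝ) * s)) *
      eLpNorm ((annulus n j).indicator f) q volume
  else
    (∑' j : ℤ, (ENNReal.ofReal ((2 : ℝ) ^ ((j : ℝ) * s)) *
      eLpNorm ((annulus n j).indicator f) q volume) ^ r.toReal) ^ (1 / r.toReal)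

/-! The weight factors as `2^{js} = 2^{js₁} 2^{js₂}`, so Hölder's inequality on each annulus
bounds the `j`-th term of the Herz sequence of `f g` by the product of the `j`-th terms for `f`
and `g`; Hölder's inequality for sequences in `ℓ^r = ℓ^{r₁} · ℓ^{r₂}` then sums these bounds. The
case `r₁ = ∞` or `r₂ = ∞` is the trivial bound by the supremum. -/

def ellNorm (p : ℝ≥0∞) (a : ℤ → ℝ≥0∞) : ℝ≥0∞ :=
  if p = ⊤ then ⨆ j : ℤ, a j else (∑' j : ℤ, a j ^ p.toReal) ^ (1 / p.toReal)

@[simp]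
lemma ellNorm_top (a : ℤ → ℝ≥0∞) : ellNorm ⊤ a = ⨆ j, a j := if_pos rfl

lemma ellNorm_mono (p : ℝ≥0∞) {a b : ℤ → ℝ≥0∞} (h : ∀ j, a j ≤ b j) :
    ellNorm p a ≤ ellNorm p b := by
  unfold ellNorm
  split_ifs
  · exact iSup_mono h
  · gcongr with j
    exact h j

lemma ellNorm_const_mul {p : ℝ≥0∞} (hp : p ≠ 0) (c : ℝ≥0∞) (a : ℤ → ℝ≥0∞) :
    ellNorm p (fun j => c * a j) = c * ellNorm p a := by
  unfold ellNorm
  split_ifs with hp_top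
  · exact (ENNReal.mul_iSup c a).symm
  · have ht : 0 < p.toReal := ENNReal.toReal_pos hp hp_top
    simp_rw [ENNReal.mul_rpow_of_nonneg _ _ ht.le, ENNReal.tsum_mul_left]
    rw [ENNReal.mul_rpow_of_nonneg _ _ (by positivity), ← ENNReal.rpow_mul,
      mul_one_div_cancel ht.ne', ENNReal.rpow_one]

lemma ellNorm_mul_le_iSup_mul {p : ℝ≥0∞} (hp : p ≠ 0) (a b : ℤ → ℝ≥0∞) :
    ellNorm p (fun j => a j * b j) ≤ (⨆ j, a j) * ellNorm p b :=
  (ellNorm_mono p fun j => mul_le_mul_left (le_iSup a j) _).trans_eq (ellNorm_const_mul hp _ b)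

lemma ellNorm_mul_le_of_ne_top {p p₁ p₂ : ℝ≥0∞} (hp₁ : p₁ ≠ 0) (hp₁_top : p₁ ≠ ⊤)
    (hp₂ : p₂ ≠ 0) (hp₂_top : p₂ ≠ ⊤) (hpe : p⁻¹ = p₁⁻¹ + p₂⁻¹) (a b : ℤ → ℝ≥0∞) :
    ellNorm p (fun j => a j * b j) ≤ ellNorm p₁ a * ellNorm p₂ b := by
  have ht₁ : 0 < p₁.toReal := ENNReal.toReal_pos hp₁ hp₁_top
  have ht₂ : 0 < p₂.toReal := ENNReal.toReal_pos hp₂ hp₂_top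
  have hp_top : p ≠ ⊤ := by
    rintro rfl
    rw [inv_top, eq_comm, add_eq_zero, ENNReal.inv_eq_zero, ENNReal.inv_eq_zero] at hpe
    exact hp₁_top hpe.1
  have hp : p ≠ 0 := by
    rintro rfl
    rw [ENNReal.inv_zero, eq_comm, ENNReal.add_eq_top, ENNReal.inv_eq_top,
      ENNReal.inv_eq_top] at hpe
    exact hpe.elim hp₁ hp₂
  have ht : 0 < p.toReal := ENNReal.toReal_pos hp hp_top
  have hte : 1 / p.toReal = 1 / p₁.toReal + 1 / p₂.toReal := by
    simpa [ENNReal.toReal_add, hp₁, hp₂] using congrArg ENNReal.toReal hpe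
  have hlt : p.toReal < p₁.toReal :=
    (one_div_lt_one_div ht₁ ht).mp (by rw [hte]; linarith [one_div_pos.mpr ht₂])
  simpa [ellNorm, hp_top, hp₁_top, hp₂_top, lintegral_count] using
    ENNReal.lintegral_Lp_mul_le_Lq_mul_Lr ht hlt hte Measure.count
      (measurable_of_countable a).aemeasurable (measurable_of_countable b).aemeasurable

lemma ellNorm_mul_le {p p₁ p₂ : ℝ≥0∞} (hp₁ : p₁ ≠ 0) (hp₂ : p₂ ≠ 0) (hpe : p⁻¹ = p₁⁻¹ + p₂⁻¹)
    (a b : ℤ → ℝ≥0∞) :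
    ellNorm p (fun j => a j * b j) ≤ ellNorm p₁ a * ellNorm p₂ b := by
  rcases eq_or_ne p₁ ⊤ with rfl | hp₁_top
  · obtain rfl : p = p₂ := by simpa using hpe
    simpa using ellNorm_mul_le_iSup_mul hp₂ a b
  rcases eq_or_ne p₂ ⊤ with rfl | hp₂_top
  · obtain rfl : p = p₁ := by simpa using hpe
    simpa [mul_comm] using ellNorm_mul_le_iSup_mul hp₁ b a
  exact ellNorm_mul_le_of_ne_top hp₁ hp₁_top hp₂ hp₂_top hpe a b

def herzSeq (n : ℕ) (s : ℝ) (q : ℝ≥0∞) (f : Euc n → ℝ) (j : ℤ) : ℝ≥0∞ :=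
  ENNReal.ofReal ((2 : ℝ) ^ ((j : ℝ) * s)) * eLpNorm ((annulus n j).indicator f) q volume

lemma herzNorm_eq_ellNorm (n : ℕ) (s : ℝ) (q r : ℝ≥0∞) (f : Euc n → ℝ) :
    herzNorm n s q r f = ellNorm r (herzSeq n s q f) := rfl

lemma measurableSet_annulus (n : ℕ) (j : ℤ) : MeasurableSet (annulus n j) :=
  measurable_norm measurableSet_Ico

lemma eLpNorm_mul_le_mul_eLpNorm {α 𝕜 : Type*} [MeasurableSpace α] [NormedRing 𝕜]
    {μ : Measure α} {q q₁ q₂ : ℝ≥0∞} (hqe : q⁻¹ = q₁⁻¹ + q₂⁻¹) {f g : α → 𝕜}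
    (hf : AEStronglyMeasurable f μ) (hg : AEStronglyMeasurable g μ) :
    eLpNorm (fun x => f x * g x) q μ ≤ eLpNorm f q₁ μ * eLpNorm g q₂ μ := by
  have : ENNReal.HolderTriple q₁ q₂ q := ⟨hqe.symm⟩
  simpa using eLpNorm_le_eLpNorm_mul_eLpNorm_of_nnnorm hf hg (· * ·) 1
    (.of_forall fun x => by simpa using nnnorm_mul_le (f x) (g x))

lemma herzSeq_mul_le {n : ℕ} {s s₁ s₂ : ℝ} {q q₁ q₂ : ℝ≥0∞} (hs : s = s₁ + s₂)
    (hqe : q⁻¹ = q₁⁻¹ + q₂⁻¹) {f g : Euc n → ℝ} (hf : Measurable f) (hg : Measurable g)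
    (j : ℤ) :
    herzSeq n s q (fun x => f x * g x) j ≤ herzSeq n s₁ q₁ f j * herzSeq n s₂ q₂ g j := by
  have hweight : ENNReal.ofReal ((2 : ℝ) ^ ((j : ℝ) * s)) =
      ENNReal.ofReal ((2 : ℝ) ^ ((j : ℝ) * s₁)) * ENNReal.ofReal ((2 : ℝ) ^ ((j : ℝ) * s₂)) := by
    rw [← ENNReal.ofReal_mul (by positivity), ← Real.rpow_add two_pos, hs, mul_add]
  rw [herzSeq, hweight, herzSeq, herzSeq, mul_mul_mul_comm]
  gcongr
  rw [indicator_mul]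
  exact eLpNorm_mul_le_mul_eLpNorm hqe
    (hf.indicator (measurableSet_annulus n j)).aestronglyMeasurable
    (hg.indicator (measurableSet_annulus n j)).aestronglyMeasurable

theorem herzNorm_mul_le_general
    (n : ℕ) (s s₁ s₂ : ℝ) (q q₁ q₂ r r₁ r₂ : ℝ≥0∞)
    (hr₁ : 0 < r₁) (hr₂ : 0 < r₂)
    (hs : s = s₁ + s₂) (hqe : q⁻¹ = q₁⁻¹ + q₂⁻¹) (hre : r⁻¹ = r₁⁻¹ + r₂⁻¹)
    (f g : Euc n → ℝ) (hf : Measurable f) (hg : Measurable g) :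
    herzNorm n s q r (fun x => f x * g x) ≤
      herzNorm n s₁ q₁ r₁ f * herzNorm n s₂ q₂ r₂ g := by
  rw [herzNorm_eq_ellNorm, herzNorm_eq_ellNorm, herzNorm_eq_ellNorm]
  exact (ellNorm_mono r (herzSeq_mul_le hs hqe hf hg)).trans
    (ellNorm_mul_le hr₁.ne' hr₂.ne' hre _ _)

/-- Hölder's inequality for Herz spaces:
if `s = s₁ + s₂`, `1/q = 1/q₁ + 1/q₂` and `1/r = 1/r₁ + 1/r₂`, then
`‖f·g‖_{K̇^s_{q,r}} ≤ ‖f‖_{K̇^{s₁}_{q₁,r₁}} ‖g‖_{K̇^{s₂}_{q₂,r₂}}`. -/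
theorem herzNorm_mul_le
    (n : ℕ) (hn : 1 ≤ n) (s s₁ s₂ : ℝ) (q q₁ q₂ r r₁ r₂ : ℝ≥0∞)
    (hq : 0 < q) (hq₁ : 0 < q₁) (hq₂ : 0 < q₂)
    (hr : 0 < r) (hr₁ : 0 < r₁) (hr₂ : 0 < r₂)
    (hs : s = s₁ + s₂) (hqe : q⁻¹ = q₁⁻¹ + q₂⁻¹) (hre : r⁻¹ = r₁⁻¹ + r₂⁻¹)
    (f g : Euc n → ℝ) (hf : Measurable f) (hg : Measurable g) :
    herzNorm n s q r (fun x => f x * g x) ≤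
      herzNorm n s₁ q₁ r₁ f * herzNorm n s₂ q₂ r₂ g :=
  herzNorm_mul_le_general n s s₁ s₂ q q₁ q₂ r r₁ r₂ hr₁ hr₂ hs hqe hre f g hf hg
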